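/- arXiv:1312.7327 — 4 statements merged into one kernel-verified Lean document; each statement's English description precedes it below -/
import Mathlib

section
/- Let A•, B•, C• be cochain complexes of abelian topological groups with continuous differentials, and let φ: A• → B•, ψ: B• → C• be continuous chain maps. Call a chain map φ quasi-open if for every n the map Z^n(A•) ⊕ B^{n-1} → Z^n(B•), (a,b) ↦ φa − d_B b, is open. If φ and ψ are both quasi-open, then the composite ψφ is quasi-open. -/
/-- A (ℤ-graded) cochain complex of abelian topological groups with continuous
differentials. -/
structure TopComplex where
  X : ℤ → Type
  [grp : ∀ n, AddCommGroup (X n)]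
  [top : ∀ n, TopologicalSpace (X n)]
  [tgrp : ∀ n, IsTopologicalAddGroup (X n)]
  d : ∀ n, X n →+ X (n + 1)
  d_cont : ∀ n, Continuous (d n)
  d_comp_d : ∀ n x, d (n + 1) (d n x) = 0

attribute [instance] TopComplex.grp TopComplex.top TopComplex.tgrp

/-- The group of `n`-cocycles, with the subspace topology. -/
abbrev TopComplex.Z (A : TopComplex) (n : ℤ) : Type := {a : A.X n // A.d n a = 0}

/-- A continuous chain map of complexes of abelian topological groups. -/
structure ChainMap (A B : TopComplex) where
  f : ∀ n, A.X n →+ B.X n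
  cont : ∀ n, Continuous (f n)
  comm : ∀ n a, f (n + 1) (A.d n a) = B.d n (f n a)

/-- Composition of chain maps. -/
def ChainMap.comp {A B C : TopComplex} (ψ : ChainMap B C) (φ : ChainMap A B) :
    ChainMap A C where
  f n := (ψ.f n).comp (φ.f n)
  cont n := (ψ.cont n).comp (φ.cont n)
  comm n a := by
    simp only [AddMonoidHom.comp_apply, φ.comm n a, ψ.comm n]

/-- A chain map `φ : A• → B•` is quasi-open if for every `n` the map
`Z^n(A•) ⊕ B^{n-1} → Z^n(B•)`, `(a, b) ↦ φ a − d_B b`, is open (here stated with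
`n` replaced by `n+1`, which ranges over all of `ℤ`). -/
def IsQuasiOpen {A B : TopComplex} (φ : ChainMap A B) : Prop :=
  ∀ n : ℤ, IsOpenMap (fun p : A.Z (n + 1) × B.X n =>
    (⟨φ.f (n + 1) p.1.1 - B.d n p.2, by
      have h1 : B.d (n + 1) (φ.f (n + 1) p.1.1) = φ.f (n + 1 + 1) (A.d (n + 1) p.1.1) :=
        (φ.comm (n + 1) p.1.1).symm
      simp [map_sub, h1, p.1.2, B.d_comp_d]⟩ : B.Z (n + 1)))

/-!
Write `Q_φ : Z^n(A) × B^{n-1} → Z^n(B)` for the map whose openness defines quasi-openness.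
Then `Q_ψ ∘ (Q_φ × id)` is open, and it factors as `Q_{ψφ} ∘ K` through the continuous
surjection `K (a, b, c) = (a, ψ b + c)`, because `ψ (d b) = d (ψ b)`. A map through which an
open map factors via a continuous surjection is itself open.
-/

namespace ChainMap

variable {A B C : TopComplex}

def quasiOpenMap (φ : ChainMap A B) (n : ℤ) (p : A.Z (n + 1) × B.X n) : B.Z (n + 1) :=
  ⟨φ.f (n + 1) p.1.1 - B.d n p.2, by simp [← φ.comm, p.1.2, B.d_comp_d]⟩

theorem isQuasiOpen_iff (φ : ChainMap A B) :
    IsQuasiOpen φ ↔ ∀ n, IsOpenMap (φ.quasiOpenMap n) :=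
  Iff.rfl

theorem comp_quasiOpenMap_apply (φ : ChainMap A B) (ψ : ChainMap B C) (n : ℤ)
    (a : A.Z (n + 1)) (b : B.X n) (c : C.X n) :
    (ψ.comp φ).quasiOpenMap n (a, ψ.f n b + c) =
      ψ.quasiOpenMap n (φ.quasiOpenMap n (a, b), c) := by
  ext
  simp only [quasiOpenMap, comp, AddMonoidHom.comp_apply, map_sub, map_add, ψ.comm]
  abel

end ChainMap

open ChainMap in
/-- If `φ` and `ψ` are quasi-open continuous chain maps of complexes of abelian
topological groups, then so is the composite `ψ ∘ φ`. -/
theorem isQuasiOpen_comp {A B C : TopComplex} (φ : ChainMap A B) (ψ : ChainMap B C)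
    (hφ : IsQuasiOpen φ) (hψ : IsQuasiOpen ψ) : IsQuasiOpen (ψ.comp φ) := by
  rw [isQuasiOpen_iff] at hφ hψ ⊢
  intro n
  let K : (A.Z (n + 1) × B.X n) × C.X n → A.Z (n + 1) × C.X n :=
    fun q => (q.1.1, ψ.f n q.1.2 + q.2)
  have hK_cont : Continuous K := by
    have := ψ.cont n
    fun_prop
  have hK_surj : Function.Surjective K := fun p => ⟨((p.1, 0), p.2), by simp [K]⟩
  have hfactor : (ψ.comp φ).quasiOpenMap n ∘ K =
      ψ.quasiOpenMap n ∘ Prod.map (φ.quasiOpenMap n) id :=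
    funext fun q => comp_quasiOpenMap_apply φ ψ n q.1.1 q.1.2 q.2
  refine IsOpenMap.of_comp hK_cont hK_surj ?_
  rw [hfactor]
  exact (hψ n).comp ((hφ n).prodMap IsOpenMap.id)
end

section
/- Let φ: A• → B• and ψ: B• → C• be continuous chain maps of complexes of abelian topological groups, where ψ is a topological embedding (i.e. B• is identified with a subcomplex of C• with the subspace topology). If the zero map 0• → C•/ψB• (into the quotient complex with quotient topology) is quasi-open, then ψ is quasi-open; if in addition ψφ is quasi-open, then φ is quasi-open. -/
/-- The zero complex `0•`. -/
def zeroComplex : TopComplex where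
  X _ := PUnit
  d _ := 0
  d_cont _ := continuous_const
  d_comp_d _ _ := rfl

/-- The zero chain map `0• → Q•`. -/
def zeroChainMap (Q : TopComplex) : ChainMap zeroComplex Q where
  f _ := 0
  cont _ := continuous_const
  comm _ _ := by simp

open Topology Filter

/-!
Everything in sight is a homomorphism of topological groups, so quasi-openness is a condition on
neighbourhoods of `0` only. Quasi-openness of `0• → Q•` says that a small cocycle of `Q•` is the
coboundary of a small cochain. Lifting through the open map `π`, a small `x ∈ C^{n+1}` whose
coboundary lies in `ψ B•` can be written `ψ b - d c` with `ψ b` and `c` small: choose a small `c`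
with `π x = -d (π c)`; then `x + d c ∈ ker π = ψ B`. Applied to the cocycles of `C•` this gives
quasi-openness of `ψ`. Applied to the correction term `x` in `ψ (φ a) - d x = ψ y` it gives
quasi-openness of `φ`, since `ψ` is injective and induces the topology of `B•`.
-/

theorem isQuasiOpen_iff {A B : TopComplex} (φ : ChainMap A B) :
    IsQuasiOpen φ ↔ ∀ n, ∀ U ∈ 𝓝 (0 : A.X (n + 1)), ∀ V ∈ 𝓝 (0 : B.X n),
      ∀ᶠ y in 𝓝 (0 : B.X (n + 1)), B.d (n + 1) y = 0 →
        ∃ a ∈ U, A.d (n + 1) a = 0 ∧ ∃ b ∈ V, φ.f (n + 1) a - B.d n b = y := by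
  refine ⟨fun hφ n U hU V hV => ?_, fun h n => ?_⟩
  · have hS : {p : A.Z (n + 1) × B.X n | p.1.1 ∈ U ∧ p.2 ∈ V} ∈ 𝓝 (⟨0, map_zero _⟩, 0) :=
      prod_mem_nhds (continuous_subtype_val.continuousAt.preimage_mem_nhds hU) hV
    have himage := (hφ n).image_mem_nhds hS
    rw [nhds_induced, mem_comap] at himage
    obtain ⟨t, ht, hts⟩ := himage
    simp only [map_zero, sub_zero] at ht
    filter_upwards [ht] with y hy hdy
    obtain ⟨⟨a, b⟩, ⟨haU, hbV⟩, hab⟩ := hts (show (⟨y, hdy⟩ : B.Z (n + 1)).1 ∈ t from hy)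
    exact ⟨a.1, haU, a.2, b, hbV, congrArg Subtype.val hab⟩
  · refine isOpenMap_iff_nhds_le.2 fun ⟨a₀, b₀⟩ => le_map_iff.2 fun S hS => ?_
    obtain ⟨u, hu, V', hV', huV⟩ := mem_nhds_prod_iff.1 hS
    rw [nhds_induced, mem_comap] at hu
    obtain ⟨U', hU', hU'u⟩ := hu
    have hU : (a₀.1 + ·) ⁻¹' U' ∈ 𝓝 (0 : A.X (n + 1)) :=
      (continuous_const_add a₀.1).continuousAt.preimage_mem_nhds (by rwa [add_zero])
    have hV : (b₀ + ·) ⁻¹' V' ∈ 𝓝 (0 : B.X n) :=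
      (continuous_const_add b₀).continuousAt.preimage_mem_nhds (by rwa [add_zero])
    set y₀ := φ.f (n + 1) a₀.1 - B.d n b₀ with hy₀
    rw [nhds_induced, mem_comap]
    refine ⟨(· - y₀) ⁻¹' {y | _}, (continuous_sub_right y₀).continuousAt.preimage_mem_nhds
      (by rw [sub_self]; exact h n _ hU _ hV), ?_⟩
    rintro ⟨z, hz⟩ hzt
    have hdz : B.d (n + 1) (z - y₀) = 0 := by
      rw [map_sub, hz, map_sub, ← φ.comm, a₀.2, B.d_comp_d]; simp
    obtain ⟨a, haU, hda, b, hbV, hab⟩ := hzt hdz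
    refine ⟨(⟨a₀.1 + a, by rw [map_add, a₀.2, hda, add_zero]⟩, b₀ + b),
      huV ⟨hU'u haU, hbV⟩, Subtype.ext ?_⟩
    change φ.f (n + 1) (a₀.1 + a) - B.d n (b₀ + b) = z
    have hz : z = y₀ + (φ.f (n + 1) a - B.d n b) := eq_add_of_sub_eq' hab.symm
    rw [map_add, map_add, hz, hy₀]
    abel

theorem eventually_exists_neg_d_eq_of_isQuasiOpen_zeroChainMap {Q : TopComplex}
    (hQ : IsQuasiOpen (zeroChainMap Q)) (n : ℤ) {V : Set (Q.X n)} (hV : V ∈ 𝓝 0) :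
    ∀ᶠ y in 𝓝 (0 : Q.X (n + 1)), Q.d (n + 1) y = 0 → ∃ e ∈ V, -Q.d n e = y := by
  filter_upwards [(isQuasiOpen_iff _).1 hQ n Set.univ univ_mem V hV] with y hy hdy
  obtain ⟨-, -, -, e, he, rfl⟩ := hy hdy
  exact ⟨e, he, by simp [zeroChainMap]⟩

theorem eventually_exists_sub_d_eq {B C Q : TopComplex} (ψ : ChainMap B C) (π : ChainMap C Q)
    (n : ℤ) (hker : (π.f (n + 1)).ker ≤ (ψ.f (n + 1)).range) (hπ : IsOpenMap (π.f n))
    (hQ : IsQuasiOpen (zeroChainMap Q)) {W : Set (C.X (n + 1))} (hW : W ∈ 𝓝 0)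
    {V : Set (C.X n)} (hV : V ∈ 𝓝 0) :
    ∀ᶠ x in 𝓝 (0 : C.X (n + 1)), π.f (n + 1 + 1) (C.d (n + 1) x) = 0 →
      ∃ b, ψ.f (n + 1) b ∈ W ∧ ∃ c ∈ V, ψ.f (n + 1) b - C.d n c = x := by
  obtain ⟨O, hO, hOO⟩ := exists_nhds_zero_half hW
  have hV' : V ∩ C.d n ⁻¹' O ∈ 𝓝 (0 : C.X n) :=
    inter_mem hV ((C.d_cont n).continuousAt.preimage_mem_nhds (by rwa [map_zero]))
  have hπV' : π.f n '' (V ∩ C.d n ⁻¹' O) ∈ 𝓝 (0 : Q.X n) := by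
    simpa using hπ.image_mem_nhds hV'
  have hπ0 : Tendsto (π.f (n + 1)) (𝓝 0) (𝓝 0) := (π.cont _).tendsto' 0 0 (map_zero _)
  filter_upwards [hO, hπ0.eventually
    (eventually_exists_neg_d_eq_of_isQuasiOpen_zeroChainMap hQ n hπV')] with x hxO hx hdx
  rw [π.comm] at hdx
  obtain ⟨_, ⟨c, ⟨hcV, hcO⟩, rfl⟩, hc⟩ := hx hdx
  obtain ⟨b, hb⟩ : x + C.d n c ∈ (ψ.f (n + 1)).range :=
    hker (by rw [AddMonoidHom.mem_ker, map_add, π.comm, ← hc, neg_add_cancel])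
  exact ⟨b, hb ▸ hOO x hxO _ hcO, c, hcV, by rw [hb, add_sub_cancel_right]⟩

theorem isQuasiOpen_of_isEmbedding_of_ker_le_range {B C Q : TopComplex} (ψ : ChainMap B C)
    (π : ChainMap C Q) (hemb : ∀ n, IsEmbedding (ψ.f n)) (hker : ∀ n, (π.f n).ker ≤ (ψ.f n).range)
    (hπ : ∀ n, IsOpenMap (π.f n)) (hQ : IsQuasiOpen (zeroChainMap Q)) : IsQuasiOpen ψ := by
  refine (isQuasiOpen_iff ψ).2 fun n U hU V hV => ?_
  rw [(hemb _).isInducing.nhds_eq_comap, map_zero, mem_comap] at hU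
  obtain ⟨W, hW, hWU⟩ := hU
  filter_upwards [eventually_exists_sub_d_eq ψ π n (hker _) (hπ n) hQ hW hV] with z hz hdz
  obtain ⟨b, hbW, c, hcV, rfl⟩ := hz (by rw [hdz, map_zero])
  refine ⟨b, hWU hbW, (hemb _).injective ?_, c, hcV, rfl⟩
  rw [ψ.comm, map_zero]
  simpa [C.d_comp_d] using hdz

theorem isQuasiOpen_of_isQuasiOpen_comp {A B C Q : TopComplex} (φ : ChainMap A B)
    (ψ : ChainMap B C) (π : ChainMap C Q) (hemb : ∀ n, IsEmbedding (ψ.f n))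
    (hker : ∀ n, (π.f n).ker = (ψ.f n).range) (hπ : ∀ n, IsOpenMap (π.f n))
    (hQ : IsQuasiOpen (zeroChainMap Q)) (hψφ : IsQuasiOpen (ψ.comp φ)) : IsQuasiOpen φ := by
  refine (isQuasiOpen_iff φ).2 fun n U hU V hV => ?_
  obtain ⟨m, rfl⟩ : ∃ m, n = m + 1 := ⟨n - 1, by ring⟩
  rw [(hemb _).isInducing.nhds_eq_comap, map_zero, mem_comap] at hV
  obtain ⟨W, hW, hWV⟩ := hV
  have hψ0 : Tendsto (ψ.f (m + 1 + 1)) (𝓝 0) (𝓝 0) := (ψ.cont _).tendsto' 0 0 (map_zero _)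
  filter_upwards [hψ0.eventually ((isQuasiOpen_iff _).1 hψφ (m + 1) U hU _
    (eventually_exists_sub_d_eq ψ π m (hker _).le (hπ m) hQ hW univ_mem))] with y hy hdy
  obtain ⟨a, haU, hda, x, hx, hax⟩ := hy (by rw [← ψ.comm, hdy, map_zero])
  change ψ.f _ (φ.f _ a) - C.d _ x = ψ.f _ y at hax
  have hdx : C.d (m + 1) x = ψ.f _ (φ.f _ a - y) := by rw [map_sub, ← hax, sub_sub_cancel]
  obtain ⟨b, hbW, c, -, rfl⟩ := hx (by rw [hdx, ← AddMonoidHom.mem_ker, hker]; exact ⟨_, rfl⟩)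
  refine ⟨a, haU, hda, b, hWV hbW, (hemb _).injective ?_⟩
  rw [← hax, map_sub, ψ.comm, map_sub (C.d _), C.d_comp_d, sub_zero]

theorem isQuasiOpen_of_embedding_general {A B C Q : TopComplex}
    (φ : ChainMap A B) (ψ : ChainMap B C) (π : ChainMap C Q)
    (hemb : ∀ n, Topology.IsEmbedding (ψ.f n))
    (hker : ∀ n, (π.f n).ker = (ψ.f n).range)
    (hquot : ∀ n, Topology.IsQuotientMap (π.f n))
    (hQ : IsQuasiOpen (zeroChainMap Q)) :
    IsQuasiOpen ψ ∧ (IsQuasiOpen (ψ.comp φ) → IsQuasiOpen φ) := by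
  have hπ n : IsOpenMap (π.f n) :=
    (AddMonoidHom.isOpenQuotientMap_of_isQuotientMap (hquot n)).isOpenMap
  exact ⟨isQuasiOpen_of_isEmbedding_of_ker_le_range ψ π hemb (fun n => (hker n).le) hπ hQ,
    isQuasiOpen_of_isQuasiOpen_comp φ ψ π hemb hker hπ hQ⟩

/-- Let `φ : A• → B•` and `ψ : B• → C•` be continuous chain maps of complexes of
abelian topological groups, where `ψ` is a topological embedding (degreewise).
Let `Q• = C•/ψB•` be the quotient complex with quotient topology, presented by a
chain map `π : C• → Q•` which is degreewise surjective, has kernel equal to the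
range of `ψ`, and is degreewise a topological quotient map.  If the zero map
`0• → Q•` is quasi-open, then `ψ` is quasi-open; if in addition `ψ ∘ φ` is
quasi-open, then `φ` is quasi-open. -/
theorem isQuasiOpen_of_embedding {A B C Q : TopComplex}
    (φ : ChainMap A B) (ψ : ChainMap B C) (π : ChainMap C Q)
    (hemb : ∀ n, Topology.IsEmbedding (ψ.f n))
    (hsurj : ∀ n, Function.Surjective (π.f n))
    (hker : ∀ n, (π.f n).ker = (ψ.f n).range)
    (hquot : ∀ n, Topology.IsQuotientMap (π.f n))
    (hQ : IsQuasiOpen (zeroChainMap Q)) :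
    IsQuasiOpen ψ ∧ (IsQuasiOpen (ψ.comp φ) → IsQuasiOpen φ) :=
  isQuasiOpen_of_embedding_general φ ψ π hemb hker hquot hQ
end

section
/- Let X, E, F be Banach spaces, B the open unit ball of X, ξ ∈ ∂B, P: B → Hom(E,F) holomorphic, and suppose every Pe (e ∈ E) continues analytically across ξ. Then there exist constants p, ε > 0 such that the set E_{p,ε} = { e ∈ E : ‖∂^k P(η)e‖_F ≤ p·k!·(1/2+ε)^{-k} for all k ∈ ℕ and all η with ‖η − ξ/2‖ < ε } has nonempty interior in E, where ∂^k denotes the k-th iterated directional derivative in the direction ξ. -/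
/-!
Fix `e`. By the identity theorem (along complex lines through a point of `B ∩ W`) the continuation
`g` of `P · e` agrees with it on all of `B`. The compact disc `{w • ξ : |w - 1/2| ≤ 1/2}` meets
`∂B` only at `ξ`, so it lies in `B ∪ W`, and `g` is bounded on a uniform neighbourhood of it. That
neighbourhood contains the discs `{η + z • ξ : |z| ≤ 1/2 + ε}` for `η` close to `ξ/2` and `ε` small,
and the Cauchy estimates on them put `e` in some `E_{p,ε}`. Each `E_{p,ε}` is closed, because
`e ↦ ∂^k P(η) e` is a continuous linear map, so Baire's theorem applied to the countable cover
`E = ⋃ₙ E_{n+1, 1/(n+2)}` gives one with nonempty interior.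
-/

open Metric Set Filter Topology

section IteratedDeriv

variable {𝕜 : Type*} [NontriviallyNormedField 𝕜]
  {F G : Type*} [NormedAddCommGroup F] [NormedSpace 𝕜 F] [NormedAddCommGroup G] [NormedSpace 𝕜 G]

theorem iteratedDeriv_clm_apply_const {c : 𝕜 → F →L[𝕜] G} {s : Set 𝕜} (hs : IsOpen s)
    {n : WithTop ℕ∞} (hc : ContDiffOn 𝕜 n c s) {i : ℕ} (hi : i ≤ n) {x : 𝕜} (hx : x ∈ s)
    (u : F) : iteratedDeriv i (fun y => c y u) x = iteratedDeriv i c x u := by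
  simp only [iteratedDeriv_eq_iteratedFDeriv, ← iteratedFDerivWithin_of_isOpen i hs hx]
  exact iteratedFDerivWithin_clm_apply_const_apply hs.uniqueDiffOn hc hi hx

end IteratedDeriv

section Slices

variable {X : Type*} [NormedAddCommGroup X] [NormedSpace ℂ X]
  {F : Type*} [NormedAddCommGroup F] [NormedSpace ℂ F]

theorem DifferentiableOn.comp_add_smul {f : X → F} {U : Set X} (hf : DifferentiableOn ℂ f U)
    (η ξ : X) : DifferentiableOn ℂ (fun z : ℂ => f (η + z • ξ)) ((fun z : ℂ => η + z • ξ) ⁻¹' U) :=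
  hf.comp (by fun_prop) fun _ hz => hz

theorem Convex.preimage_add_smul {U : Set X} (hU : Convex ℝ U) (η ξ : X) :
    Convex ℝ ((fun z : ℂ => η + z • ξ) ⁻¹' U) := by
  intro z₁ hz₁ z₂ hz₂ a b ha hb hab
  have : η + (a • z₁ + b • z₂) • ξ = a • (η + z₁ • ξ) + b • (η + z₂ • ξ) := by
    simp only [← Complex.coe_smul]
    linear_combination (norm := module) -(hab • η)
  rw [mem_preimage, this]
  exact hU hz₁ hz₂ ha hb hab

/-- The identity theorem in a complex normed space, reduced to the one-variable one along the
complex line through a point of `V`. -/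
theorem Convex.eqOn_of_eqOn_of_isOpen [CompleteSpace F] {f g : X → F} {U V : Set X}
    (hU : IsOpen U) (hUc : Convex ℝ U) (hf : DifferentiableOn ℂ f U)
    (hg : DifferentiableOn ℂ g U) (hV : IsOpen V) (hVU : V ⊆ U) (hVne : V.Nonempty)
    (hfg : EqOn f g V) : EqOn f g U := by
  obtain ⟨y, hy⟩ := hVne
  intro x hx
  let ℓ : ℂ → X := fun z => y + z • (x - y)
  have hℓ : Continuous ℓ := by fun_prop
  have hD : IsOpen (ℓ ⁻¹' U) := hU.preimage hℓ
  have h0 : (0 : ℂ) ∈ ℓ ⁻¹' U := by simpa [ℓ] using hVU hy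
  have h1 : (1 : ℂ) ∈ ℓ ⁻¹' U := by simpa [ℓ] using hx
  have hfg0 : (fun z => f (ℓ z)) =ᶠ[𝓝 0] fun z => g (ℓ z) :=
    Filter.mem_of_superset (hℓ.continuousAt.preimage_mem_nhds (by simpa [ℓ] using hV.mem_nhds hy))
      fun z hz => hfg hz
  have := ((hf.comp_add_smul y (x - y)).analyticOnNhd hD).eqOn_of_preconnected_of_eventuallyEq
    ((hg.comp_add_smul y (x - y)).analyticOnNhd hD) (hUc.preimage_add_smul y (x - y)).isPreconnected
    h0 hfg0 h1
  simpa [ℓ] using this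

theorem eqOn_ball_of_eqOn_ball_inter [CompleteSpace F] {f g : X → F} {c ξ : X} {r : ℝ}
    (hr : r ≠ 0) (hξ : dist ξ c ≤ r) {W : Set X} (hW : IsOpen W) (hξW : ξ ∈ W)
    (hf : DifferentiableOn ℂ f (ball c r)) (hg : DifferentiableOn ℂ g (ball c r))
    (hfg : EqOn f g (ball c r ∩ W)) : EqOn f g (ball c r) := by
  have hξ' : ξ ∈ closure (ball c r) := by rwa [closure_ball c hr]
  exact (convex_ball c r).eqOn_of_eqOn_of_isOpen isOpen_ball hf hg (isOpen_ball.inter hW)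
    inter_subset_left (inter_comm W _ ▸ mem_closure_iff.1 hξ' W hW hξW) hfg

end Slices

theorem Complex.closedBall_half_subset_insert_one_ball :
    closedBall (1/2 : ℂ) (1/2) ⊆ insert 1 (ball 0 1) := by
  intro w hw
  rw [mem_closedBall, Complex.dist_eq] at hw
  rw [mem_insert_iff, mem_ball_zero_iff, or_iff_not_imp_right, not_lt]
  intro hw1
  have h1 : 1 ≤ w.re * w.re + w.im * w.im := by
    rw [← Complex.normSq_apply, ← Complex.sq_norm]; nlinarith
  have h2 : (w.re - 1/2) * (w.re - 1/2) + w.im * w.im ≤ 1/4 := by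
    have := Complex.sq_norm (w - 1/2)
    rw [Complex.normSq_apply] at this
    simp only [Complex.sub_re, Complex.sub_im, Complex.div_ofNat_re, Complex.one_re,
      Complex.div_ofNat_im, Complex.one_im] at this
    nlinarith [norm_nonneg (w - 1/2)]
  apply Complex.ext <;> simp <;> nlinarith

theorem IsCompact.exists_thickening_subset_forall_norm_le {X F : Type*} [PseudoMetricSpace X]
    [NormedAddCommGroup F] {K Ω : Set X} {g : X → F} (hK : IsCompact K) (hΩ : IsOpen Ω)
    (hKΩ : K ⊆ Ω) (hg : ContinuousOn g Ω) :
    ∃ δ > 0, ∃ M, thickening δ K ⊆ Ω ∧ ∀ x ∈ thickening δ K, ‖g x‖ ≤ M := by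
  obtain ⟨M, hM⟩ := hK.exists_bound_of_continuousOn (hg.mono hKΩ)
  obtain ⟨δ, hδ, hsub⟩ := hK.exists_thickening_subset_open
    (hg.isOpen_inter_preimage hΩ (isOpen_ball (x := 0) (ε := M + 1))) fun x hx =>
      ⟨hKΩ hx, mem_ball_zero_iff.2 ((hM x hx).trans_lt (lt_add_one M))⟩
  refine ⟨δ, hδ, M + 1, fun x hx => (hsub hx).1, fun x hx => ?_⟩
  simpa using (mem_ball_zero_iff.1 (hsub hx).2).le

section Disc

variable {X : Type*} [NormedAddCommGroup X] [NormedSpace ℂ X]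

theorem mem_ball_of_norm_sub_half_smul_lt {ξ η : X} (hξ : ‖ξ‖ ≤ 1) {ε : ℝ} (hε : ε ≤ 1/2)
    (hη : ‖η - (1/2 : ℂ) • ξ‖ < ε) : η ∈ ball (0 : X) 1 := by
  rw [mem_ball_zero_iff]
  calc ‖η‖ ≤ ‖η - (1/2 : ℂ) • ξ‖ + ‖(1/2 : ℂ) • ξ‖ := norm_le_norm_sub_add _ _
    _ < 1 := by rw [norm_smul]; norm_num; nlinarith

theorem add_smul_mem_thickening {ξ η : X} (hξ : ‖ξ‖ ≤ 1) {ε : ℝ} (hε : 0 < ε)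
    (hη : ‖η - (1/2 : ℂ) • ξ‖ < ε) {z : ℂ} (hz : ‖z‖ ≤ 1/2 + ε) :
    η + z • ξ ∈ thickening (3 * ε) ((· • ξ) '' closedBall (1/2 : ℂ) (1/2)) := by
  have hw : 1/2 + z ∈ thickening (2 * ε) (closedBall (1/2 : ℂ) (1/2)) := by
    rw [thickening_closedBall (by positivity) (by norm_num), mem_ball, dist_eq_norm]
    simp only [add_sub_cancel_left]
    linarith
  obtain ⟨w, hw, hdist⟩ := mem_thickening_iff.1 hw
  refine mem_thickening_iff.2 ⟨w • ξ, mem_image_of_mem _ hw, ?_⟩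
  rw [dist_eq_norm] at hdist ⊢
  calc ‖η + z • ξ - w • ξ‖ = ‖(η - (1/2 : ℂ) • ξ) + (1/2 + z - w) • ξ‖ := by congr 1; module
    _ ≤ ‖η - (1/2 : ℂ) • ξ‖ + ‖1/2 + z - w‖ * ‖ξ‖ := (norm_add_le _ _).trans_eq (by rw [norm_smul])
    _ < 3 * ε := by nlinarith [norm_nonneg (1/2 + z - w)]

theorem image_smul_closedBall_half_subset {ξ : X} (hξ : ‖ξ‖ = 1) {W : Set X} (hξW : ξ ∈ W) :
    (· • ξ) '' closedBall (1/2 : ℂ) (1/2) ⊆ ball 0 1 ∪ W := by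
  rintro _ ⟨w, hw, rfl⟩
  rcases Complex.closedBall_half_subset_insert_one_ball hw with rfl | hw
  · simpa using Or.inr hξW
  · left; simpa [norm_smul, hξ] using hw

end Disc

section CauchyEstimateSet

variable {X : Type*} [NormedAddCommGroup X] [NormedSpace ℂ X]
  {E : Type*} [NormedAddCommGroup E] [NormedSpace ℂ E]
  {F : Type*} [NormedAddCommGroup F] [NormedSpace ℂ F]

/-- The set `E_{p,ε}` of the paper. -/
def cauchyEstimateSet (P : X → E →L[ℂ] F) (ξ : X) (p ε : ℝ) : Set E :=
  {e : E | ∀ (k : ℕ) (η : X), ‖η - ((1 : ℂ)/2) • ξ‖ < ε →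
    ‖iteratedDeriv k (fun z : ℂ => P (η + z • ξ) e) 0‖ ≤
      p * (Nat.factorial k) * ((1/2 + ε)⁻¹) ^ k}

theorem cauchyEstimateSet_mono {P : X → E →L[ℂ] F} {ξ : X} {p p' ε ε' : ℝ} (hp : 0 ≤ p)
    (hpp' : p ≤ p') (hε' : 0 ≤ ε') (hεε' : ε' ≤ ε) :
    cauchyEstimateSet P ξ p ε ⊆ cauchyEstimateSet P ξ p' ε' := by
  intro e he k η hη
  have hε : 0 ≤ ε := hε'.trans hεε'
  refine (he k η (hη.trans_le hεε')).trans ?_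
  bound

theorem isClosed_cauchyEstimateSet [CompleteSpace F] {P : X → E →L[ℂ] F}
    (hP : DifferentiableOn ℂ P (ball 0 1)) {ξ : X} (hξ : ‖ξ‖ ≤ 1) (p : ℝ) {ε : ℝ}
    (hε : ε ≤ 1/2) : IsClosed (cauchyEstimateSet P ξ p ε) := by
  have hset : cauchyEstimateSet P ξ p ε = ⋂ (k : ℕ) (η : X) (_ : ‖η - ((1 : ℂ)/2) • ξ‖ < ε),
      {e | ‖iteratedDeriv k (fun z : ℂ => P (η + z • ξ) e) 0‖ ≤
        p * (Nat.factorial k) * ((1/2 + ε)⁻¹) ^ k} := by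
    ext; simp [cauchyEstimateSet]
  rw [hset]
  refine isClosed_iInter fun k => isClosed_iInter fun η => isClosed_iInter fun hη => ?_
  have hD : IsOpen ((fun z : ℂ => η + z • ξ) ⁻¹' ball 0 1) := isOpen_ball.preimage (by fun_prop)
  have h0 : (0 : ℂ) ∈ (fun z : ℂ => η + z • ξ) ⁻¹' ball 0 1 := by
    simpa using mem_ball_of_norm_sub_half_smul_lt hξ hε hη
  have hL : ∀ e, iteratedDeriv k (fun z : ℂ => P (η + z • ξ) e) 0 =
      iteratedDeriv k (fun z : ℂ => P (η + z • ξ)) 0 e := fun e =>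
    iteratedDeriv_clm_apply_const hD ((hP.comp_add_smul η ξ).contDiffOn hD) le_top h0 e
  simp only [hL]
  exact isClosed_le (by fun_prop) continuous_const

theorem iUnion_cauchyEstimateSet_eq_univ {P : X → E →L[ℂ] F} {ξ : X}
    (h : ∀ e, ∃ p > 0, ∃ ε > 0, e ∈ cauchyEstimateSet P ξ p ε) :
    ⋃ n : ℕ, cauchyEstimateSet P ξ (n + 1) (1 / (n + 2)) = univ := by
  refine eq_univ_of_forall fun e => ?_
  obtain ⟨p, hp, ε, hε, he⟩ := h e
  obtain ⟨n, hn⟩ := exists_nat_gt (max p ε⁻¹)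
  refine mem_iUnion.2 ⟨n, cauchyEstimateSet_mono hp.le ?_ (by positivity) ?_ he⟩
  · linarith [le_max_left p ε⁻¹]
  · rw [one_div, inv_le_comm₀ (by positivity) hε]
    linarith [le_max_right p ε⁻¹]

end CauchyEstimateSet

theorem exists_mem_cauchyEstimateSet {X E F : Type*} [NormedAddCommGroup X] [NormedSpace ℂ X]
    [NormedAddCommGroup E] [NormedSpace ℂ E] [NormedAddCommGroup F] [NormedSpace ℂ F]
    [CompleteSpace F] {P : X → E →L[ℂ] F} (hP : DifferentiableOn ℂ P (ball 0 1)) {ξ : X}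
    (hξ : ‖ξ‖ = 1) {e : E} {W : Set X} (hW : IsOpen W) (hξW : ξ ∈ W) {g : X → F}
    (hg : DifferentiableOn ℂ g (ball 0 1 ∪ W)) (hgP : EqOn g (fun x => P x e) (ball 0 1 ∩ W)) :
    ∃ p > 0, ∃ ε > 0, e ∈ cauchyEstimateSet P ξ p ε := by
  have hgP' : EqOn g (fun x => P x e) (ball 0 1) :=
    eqOn_ball_of_eqOn_ball_inter one_ne_zero (by simp [hξ]) hW hξW (hg.mono subset_union_left)
      (hP.clm_apply (differentiableOn_const e)) hgP
  set K := (· • ξ) '' closedBall (1/2 : ℂ) (1/2)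
  have hK : IsCompact K := (isCompact_closedBall _ _).image (by fun_prop)
  obtain ⟨δ, hδ, M, hΩ, hM⟩ := hK.exists_thickening_subset_forall_norm_le
    (isOpen_ball.union hW) (image_smul_closedBall_half_subset hξ hξW) hg.continuousOn
  set ε := min (δ / 3) (1/2)
  have hε : 0 < ε := by positivity
  refine ⟨max M 1, by positivity, ε, hε, fun k η hη => ?_⟩
  have hdisc : MapsTo (fun z : ℂ => η + z • ξ) (closedBall 0 (1/2 + ε)) (thickening δ K) :=
    fun z hz => thickening_mono (by linarith [min_le_left (δ/3) (1/2)]) K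
      (add_smul_mem_thickening hξ.le hε hη (mem_closedBall_zero_iff.1 hz))
  have hslice : (fun z : ℂ => g (η + z • ξ)) =ᶠ[𝓝 0] fun z => P (η + z • ξ) e := by
    have hη1 := mem_ball_of_norm_sub_half_smul_lt hξ.le (min_le_right _ _) hη
    refine Filter.mem_of_superset ((Continuous.continuousAt (by fun_prop)).preimage_mem_nhds
      (isOpen_ball.mem_nhds (by simpa using hη1))) fun z hz => hgP' hz
  have hcauchy := Complex.norm_iteratedDeriv_le_of_forall_mem_sphere_norm_le k
    (by positivity : (0 : ℝ) < 1/2 + ε)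
    (((hg.mono hΩ).comp (by fun_prop) hdisc).diffContOnCl_ball subset_rfl)
    fun z hz => hM _ (hdisc (sphere_subset_closedBall hz))
  rw [← hslice.iteratedDeriv_eq]
  calc _ ≤ k.factorial * M / (1/2 + ε) ^ k := hcauchy
    _ ≤ max M 1 * k.factorial * ((1/2 + ε)⁻¹) ^ k := by
      rw [inv_pow, ← div_eq_mul_inv, mul_comm (max M 1)]
      gcongr
      exact le_max_left _ _

theorem exists_interior_point_of_cauchy_estimates_general
    {X : Type} [NormedAddCommGroup X] [NormedSpace ℂ X]
    {E : Type} [NormedAddCommGroup E] [NormedSpace ℂ E] [CompleteSpace E]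
    {F : Type} [NormedAddCommGroup F] [NormedSpace ℂ F] [CompleteSpace F]
    (ξ : X) (hξ : ‖ξ‖ = 1)
    (P : X → E →L[ℂ] F) (hP : DifferentiableOn ℂ P (ball 0 1))
    (hext : ∀ e : E, ∃ W : Set X, IsOpen W ∧ ξ ∈ W ∧
      ∃ g : X → F, DifferentiableOn ℂ g (ball 0 1 ∪ W) ∧
        Set.EqOn g (fun x => P x e) (ball 0 1 ∩ W)) :
    ∃ p : ℝ, 0 < p ∧ ∃ ε : ℝ, 0 < ε ∧
      (interior {e : E | ∀ (k : ℕ) (η : X), ‖η - ((1 : ℂ)/2) • ξ‖ < ε →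
        ‖iteratedDeriv k (fun z : ℂ => P (η + z • ξ) e) 0‖ ≤
          p * (Nat.factorial k) * ((1/2 + ε)⁻¹) ^ k}).Nonempty := by
  have hcover := iUnion_cauchyEstimateSet_eq_univ (P := P) (ξ := ξ) fun e => by
    obtain ⟨W, hW, hξW, g, hg, hgP⟩ := hext e
    exact exists_mem_cauchyEstimateSet hP hξ hW hξW hg hgP
  obtain ⟨n, hn⟩ := nonempty_interior_of_iUnion_of_closed
    (fun n : ℕ => isClosed_cauchyEstimateSet hP hξ.le _ (by
      rw [one_div_le_one_div (by positivity) two_pos]; linarith [n.cast_nonneg (α := ℝ)]))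
    hcover
  exact ⟨n + 1, by positivity, 1 / (n + 2), by positivity, hn⟩

/-- Let `X, E, F` be Banach spaces, `B` the open unit ball of `X`, `ξ ∈ ∂B`,
`P : B → Hom(E,F)` holomorphic, and suppose every `Pe` (`e ∈ E`) continues
analytically across `ξ`.  Then there are constants `p, ε > 0` such that the set
`E_{p,ε}` of those `e ∈ E` with
`‖∂^k P(η) e‖ ≤ p · k! · (1/2 + ε)^{-k}` for all `k ∈ ℕ` and all `η` with
`‖η − ξ/2‖ < ε` has nonempty interior in `E`.  (Here `∂^k` is the `k`-th
iterated derivative in the direction `ξ`.) -/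
theorem exists_interior_point_of_cauchy_estimates
    {X : Type} [NormedAddCommGroup X] [NormedSpace ℂ X] [CompleteSpace X]
    {E : Type} [NormedAddCommGroup E] [NormedSpace ℂ E] [CompleteSpace E]
    {F : Type} [NormedAddCommGroup F] [NormedSpace ℂ F] [CompleteSpace F]
    (ξ : X) (hξ : ‖ξ‖ = 1)
    (P : X → E →L[ℂ] F) (hP : DifferentiableOn ℂ P (ball 0 1))
    (hext : ∀ e : E, ∃ W : Set X, IsOpen W ∧ ξ ∈ W ∧
      ∃ g : X → F, DifferentiableOn ℂ g (ball 0 1 ∪ W) ∧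
        Set.EqOn g (fun x => P x e) (ball 0 1 ∩ W)) :
    ∃ p : ℝ, 0 < p ∧ ∃ ε : ℝ, 0 < ε ∧
      (interior {e : E | ∀ (k : ℕ) (η : X), ‖η - ((1 : ℂ)/2) • ξ‖ < ε →
        ‖iteratedDeriv k (fun z : ℂ => P (η + z • ξ) e) 0‖ ≤
          p * (Nat.factorial k) * ((1/2 + ε)⁻¹) ^ k}).Nonempty :=
  exists_interior_point_of_cauchy_estimates_general ξ hξ P hP hext
end

section
/- Let E = ℓ^p and Φ(ζ)(x) = (x_n ζ^{n+1}/n^{n+1}). Define entire functions e_n: ℂ → E by e_n(ζ) = (0,…,0, ζ^n/n, 0,…) (nonzero only in slot n), and suppose g_n: ℂ → E are entire functions such that g_n − e_n = Φ h_n for some entire h_n: ℂ → E. Then for every r > 1, max_{|ζ|=r} ‖g_n(ζ)‖ ≥ r^n/n; in particular the sequence g_n does not tend to 0 uniformly on the circle |ζ| = r. -/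
open Metric

/-!
Only the `n`-th coordinate of `g n` matters. Since `Φ ζ` multiplies that coordinate by
`ζ ^ (n + 1) / n ^ (n + 1)`, it equals `ζ ^ n * u ζ` with `u` entire and `u 0 = 1 / n`.
By the maximum modulus principle `‖u‖ ≥ 1 / n` somewhere on the circle `|ζ| = r`, so
`‖g n ζ‖ ≥ |(g n ζ) n| ≥ r ^ n / n` there. For `r > 1` Bernoulli's inequality gives
`r ^ n / n > r - 1 > 0`, which rules out uniform convergence to `0`.
-/

theorem exists_mem_sphere_norm_apply_zero_le {F : Type*} [NormedAddCommGroup F]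
    [NormedSpace ℂ F] {u : ℂ → F} (hu : Differentiable ℂ u) {r : ℝ} (hr : 0 < r) :
    ∃ z ∈ sphere (0 : ℂ) r, ‖u 0‖ ≤ ‖u z‖ := by
  obtain ⟨z, hz, hmax⟩ := Complex.exists_mem_frontier_isMaxOn_norm
    (isBounded_ball (x := (0 : ℂ))) (nonempty_ball.mpr hr) hu.diffContOnCl
  rw [frontier_ball _ hr.ne'] at hz
  refine ⟨z, hz, hmax ?_⟩
  rw [closure_ball _ hr.ne']
  exact mem_closedBall_self hr.le

theorem exists_mem_sphere_pow_mul_norm_le_norm_pow_smul {F : Type*} [NormedAddCommGroup F]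
    [NormedSpace ℂ F] {u : ℂ → F} (hu : Differentiable ℂ u) {r : ℝ} (hr : 0 < r) (k : ℕ) :
    ∃ z ∈ sphere (0 : ℂ) r, r ^ k * ‖u 0‖ ≤ ‖z ^ k • u z‖ := by
  obtain ⟨z, hz, hle⟩ := exists_mem_sphere_norm_apply_zero_le hu hr
  refine ⟨z, hz, ?_⟩
  rw [norm_smul, norm_pow, mem_sphere_zero_iff_norm.mp hz]
  gcongr

theorem sub_one_lt_pow_div {r : ℝ} (hr : 0 ≤ r) {n : ℕ} (hn : 0 < n) :
    r - 1 < r ^ n / n := by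
  have bernoulli := one_add_mul_le_pow (a := r - 1) (by linarith) n
  rw [add_sub_cancel] at bernoulli
  rw [lt_div_iff₀ (by exact_mod_cast hn)]
  nlinarith

theorem not_tendstoUniformlyOn_zero_of_le_norm {ι α E : Type*} [SeminormedAddCommGroup E]
    {l : Filter ι} [l.NeBot] {F : ι → α → E} {s : Set α} {ε : ℝ} (hε : 0 < ε)
    (hF : ∀ᶠ i in l, ∃ x ∈ s, ε ≤ ‖F i x‖) : ¬ TendstoUniformlyOn F 0 l s := by
  intro hlim
  obtain ⟨i, ⟨x, hx, hle⟩, hlt⟩ := (hF.and (tendstoUniformlyOn_iff.mp hlim ε hε)).exists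
  have := hlt x hx
  rw [Pi.zero_apply, dist_zero_left] at this
  linarith

section Lift

variable {p : ENNReal} [Fact (1 ≤ p)]

theorem lift_apply_self_eq_pow_mul
    {Φ : ℂ → (lp (fun _ : ℕ+ => ℂ) p →L[ℂ] lp (fun _ : ℕ+ => ℂ) p)}
    (hΦ : ∀ (ζ : ℂ) (x : lp (fun _ : ℕ+ => ℂ) p) (n : ℕ+),
      (Φ ζ x : ∀ _ : ℕ+, ℂ) n = (x : ∀ _ : ℕ+, ℂ) n * ζ ^ ((n : ℕ) + 1) / (n : ℂ) ^ ((n : ℕ) + 1))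
    {n : ℕ+} {ζ : ℂ} {x y : lp (fun _ : ℕ+ => ℂ) p}
    (hxy : x - lp.single p n (ζ ^ (n : ℕ) / (n : ℂ)) = Φ ζ y) :
    x n = ζ ^ (n : ℕ) * (1 / (n : ℂ) + ζ * (y n / (n : ℂ) ^ ((n : ℕ) + 1))) := by
  have hcoord := congrArg (fun f : lp (fun _ : ℕ+ => ℂ) p => f n) hxy
  simp only [lp.coeFn_sub, Pi.sub_apply, lp.single_apply_self, hΦ] at hcoord
  linear_combination hcoord

theorem exists_mem_sphere_pow_div_le_norm_of_lift
    {Φ : ℂ → (lp (fun _ : ℕ+ => ℂ) p →L[ℂ] lp (fun _ : ℕ+ => ℂ) p)}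
    (hΦ : ∀ (ζ : ℂ) (x : lp (fun _ : ℕ+ => ℂ) p) (n : ℕ+),
      (Φ ζ x : ∀ _ : ℕ+, ℂ) n = (x : ∀ _ : ℕ+, ℂ) n * ζ ^ ((n : ℕ) + 1) / (n : ℂ) ^ ((n : ℕ) + 1))
    {n : ℕ+} {g h : ℂ → lp (fun _ : ℕ+ => ℂ) p} (hh : Differentiable ℂ h)
    (hgh : ∀ ζ : ℂ, g ζ - lp.single p n (ζ ^ (n : ℕ) / (n : ℂ)) = Φ ζ (h ζ))
    {r : ℝ} (hr : 0 < r) :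
    ∃ ζ ∈ sphere (0 : ℂ) r, r ^ (n : ℕ) / (n : ℝ) ≤ ‖g ζ‖ := by
  set u : ℂ → ℂ := fun ζ => 1 / (n : ℂ) + ζ * (h ζ n / (n : ℂ) ^ ((n : ℕ) + 1))
  have hu : Differentiable ℂ u :=
    (differentiable_const _).add
      (differentiable_id.mul (((lp.evalCLM ℂ _ p n).differentiable.comp hh).div_const _))
  obtain ⟨z, hz, hle⟩ := exists_mem_sphere_pow_mul_norm_le_norm_pow_smul hu hr n
  refine ⟨z, hz, ?_⟩
  have hp : p ≠ 0 := (zero_lt_one.trans_le Fact.out).ne'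
  calc r ^ (n : ℕ) / (n : ℝ) = r ^ (n : ℕ) * ‖u 0‖ := by simp [u, div_eq_mul_inv]
    _ ≤ ‖z ^ (n : ℕ) • u z‖ := hle
    _ = ‖g z n‖ := by rw [lift_apply_self_eq_pow_mul hΦ (hgh z), smul_eq_mul]
    _ ≤ ‖g z‖ := lp.norm_apply_le_norm hp (g z) n

end Lift

theorem lower_bound_for_lifts_general (p : ENNReal) [Fact (1 ≤ p)]
    (Φ : ℂ → (lp (fun _ : ℕ+ => ℂ) p →L[ℂ] lp (fun _ : ℕ+ => ℂ) p))
    (hΦ : ∀ (ζ : ℂ) (x : lp (fun _ : ℕ+ => ℂ) p) (n : ℕ+),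
      (Φ ζ x : ∀ _ : ℕ+, ℂ) n = (x : ∀ _ : ℕ+, ℂ) n * ζ ^ ((n : ℕ) + 1) / (n : ℂ) ^ ((n : ℕ) + 1))
    (g : ℕ+ → ℂ → lp (fun _ : ℕ+ => ℂ) p)
    (hlift : ∀ n : ℕ+, ∃ h : ℂ → lp (fun _ : ℕ+ => ℂ) p, Differentiable ℂ h ∧
      ∀ ζ : ℂ, g n ζ - lp.single p n (ζ ^ (n : ℕ) / (n : ℂ)) = Φ ζ (h ζ)) :
    ∀ r : ℝ, 1 < r →
      (∀ n : ℕ+, ∃ ζ : ℂ, ‖ζ‖ = r ∧ r ^ (n : ℕ) / (n : ℝ) ≤ ‖g n ζ‖) ∧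
      ¬ TendstoUniformlyOn (fun (n : ℕ+) (ζ : ℂ) => g n ζ) 0 Filter.atTop
          (sphere (0 : ℂ) r) := by
  intro r hr
  have hbound : ∀ n : ℕ+, ∃ ζ ∈ sphere (0 : ℂ) r, r ^ (n : ℕ) / (n : ℝ) ≤ ‖g n ζ‖ := by
    intro n
    obtain ⟨h, hh, hgh⟩ := hlift n
    exact exists_mem_sphere_pow_div_le_norm_of_lift hΦ hh hgh (by linarith)
  refine ⟨fun n => ?_, not_tendstoUniformlyOn_zero_of_le_norm (sub_pos.mpr hr) ?_⟩
  · obtain ⟨ζ, hζ, hle⟩ := hbound n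
    exact ⟨ζ, mem_sphere_zero_iff_norm.mp hζ, hle⟩
  · refine Filter.Eventually.of_forall fun n => ?_
    obtain ⟨ζ, hζ, hle⟩ := hbound n
    exact ⟨ζ, hζ, (sub_one_lt_pow_div (by linarith) n.pos).le.trans hle⟩

/-- Let `E = ℓ^p` and `Φ(ζ)(x) = (x_n ζ^{n+1}/n^{n+1})`.  Let
`e_n(ζ) = (0,…,ζ^n/n,0,…)` (nonzero only in slot `n`), and suppose
`g_n : ℂ → E` are entire with `g_n − e_n = Φ h_n` for entire `h_n`.  Then for
every `r > 1` and every `n`, `max_{|ζ|=r} ‖g_n(ζ)‖ ≥ r^n/n`; in particular the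
sequence `g_n` does not tend to `0` uniformly on the circle `|ζ| = r`. -/
theorem lower_bound_for_lifts (p : ENNReal) [Fact (1 ≤ p)]
    (Φ : ℂ → (lp (fun _ : ℕ+ => ℂ) p →L[ℂ] lp (fun _ : ℕ+ => ℂ) p))
    (hΦ : ∀ (ζ : ℂ) (x : lp (fun _ : ℕ+ => ℂ) p) (n : ℕ+),
      (Φ ζ x : ∀ _ : ℕ+, ℂ) n = (x : ∀ _ : ℕ+, ℂ) n * ζ ^ ((n : ℕ) + 1) / (n : ℂ) ^ ((n : ℕ) + 1))
    (g : ℕ+ → ℂ → lp (fun _ : ℕ+ => ℂ) p)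
    (hg : ∀ n, Differentiable ℂ (g n))
    (hlift : ∀ n : ℕ+, ∃ h : ℂ → lp (fun _ : ℕ+ => ℂ) p, Differentiable ℂ h ∧
      ∀ ζ : ℂ, g n ζ - lp.single p n (ζ ^ (n : ℕ) / (n : ℂ)) = Φ ζ (h ζ)) :
    ∀ r : ℝ, 1 < r →
      (∀ n : ℕ+, ∃ ζ : ℂ, ‖ζ‖ = r ∧ r ^ (n : ℕ) / (n : ℝ) ≤ ‖g n ζ‖) ∧
      ¬ TendstoUniformlyOn (fun (n : ℕ+) (ζ : ℂ) => g n ζ) 0 Filter.atTop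
          (sphere (0 : ℂ) r) :=
  lower_bound_for_lifts_general p Φ hΦ g hlift
end
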